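/- arXiv:1503.08060 — 3 statements merged into one kernel-verified Lean document; each statement's English description precedes it below -/
import Mathlib

section
/- Let φ : ℝ → ℝ be three times continuously differentiable with sup_x φ''(x) − inf_x φ''(x) ≤ B and |φ'''(x)| ≤ K3 for all x, and let β > 0, μ0, δr ∈ ℝ satisfy β + φ''(μ0) − B > 0. Then the hybrid distribution h is a well-defined probability measure with finite variance v_h > 0, and its precision satisfies v_h⁻¹ ≥ β + E_h[φ''(x)] − K3²·(β + φ''(μ0) + B)²·(β + φ''(μ0) − B)⁻⁴. -/
/-!
The hybrid is the Gibbs measure `ν ∝ exp (-V)` of `V x = φ x + β x² / 2 - (β μ0 - δr) x`, whose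
second derivative lies in `[a, b]` with `a = β + φ''(μ0) - B`, `b = β + φ''(μ0) + B`, and whose
third derivative is bounded by `K3`. Integration by parts against `exp (-V)` (Stein's identity)
gives `E[V'] = 0`, `E[x V'] = 1` and `E[V'²] = E[V'']`; so the orthogonal projection of the score
`V'` onto affine functions in `L²(ν)` is `(x - E x) / Var`, and `E[V''] - 1 / Var ≤ E[(V' - L)²]`
for every affine `L`. Take for `L` the tangent line of `V'` at its zero `m`: by Taylor,
`(V' - L)² ≤ K3² (x - m)⁴ / 4`, while Stein's identity for `x - m` and `(x - m)³` together with
`V'' ≥ a` gives `E[(x - m)⁴] ≤ 3 / a²`. Hence `E[V''] - 1 / Var ≤ 3 K3² / (4 a²) ≤ K3² b² / a⁴`.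
-/
open MeasureTheory Real Filter

noncomputable section

/-- Unnormalized density of the hybrid distribution:
`l(x) · exp(−(β/2)x² + (β μ0 − δr)x)` with `l = exp (−φ)`. -/
def hybridDens (φ : ℝ → ℝ) (β μ0 δr : ℝ) (x : ℝ) : ℝ :=
  Real.exp (-(φ x) - β / 2 * x ^ 2 + (β * μ0 - δr) * x)

/-- The hybrid distribution: the normalized measure with density
proportional to `hybridDens`. -/
def hybrid (φ : ℝ → ℝ) (β μ0 δr : ℝ) : Measure ℝ :=
  ((volume.withDensity fun x => ENNReal.ofReal (hybridDens φ β μ0 δr x)) Set.univ)⁻¹ •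
    (volume.withDensity fun x => ENNReal.ofReal (hybridDens φ β μ0 δr x))

/-- Mean of the hybrid distribution. -/
def hybridMean (φ : ℝ → ℝ) (β μ0 δr : ℝ) : ℝ :=
  ∫ x, x ∂(hybrid φ β μ0 δr)

/-- Variance of the hybrid distribution. -/
def hybridVar (φ : ℝ → ℝ) (β μ0 δr : ℝ) : ℝ :=
  ∫ x, (x - hybridMean φ β μ0 δr) ^ 2 ∂(hybrid φ β μ0 δr)

open ProbabilityTheory

section Taylor

variable {f f' f'' : ℝ → ℝ}

theorem half_mul_sq_le_taylor_remainder (hf : ∀ x, HasDerivAt f (f' x) x)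
    (hf' : ∀ x, HasDerivAt f' (f'' x) x) {a : ℝ} (ha : ∀ x, a ≤ f'' x) (c x : ℝ) :
    a / 2 * (x - c) ^ 2 ≤ f x - f c - f' c * (x - c) := by
  set G : ℝ → ℝ := fun t => f t - f c - f' c * (t - c) - a / 2 * (t - c) ^ 2
  have hG : ∀ t, HasDerivAt G (f' t - f' c - a * (t - c)) t := fun t => by
    have := (((hf t).sub_const (f c)).fun_sub
      (((hasDerivAt_id t).sub_const c).const_mul (f' c))).fun_sub
      ((((hasDerivAt_id t).sub_const c).pow 2).const_mul (a / 2))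
    exact this.congr_deriv (by simp; ring)
  have hG' : ∀ t, HasDerivAt (fun t => f' t - f' c - a * (t - c)) (f'' t - a) t := fun t => by
    simpa using ((hf' t).sub_const (f' c)).fun_sub (((hasDerivAt_id t).sub_const c).const_mul a)
  have hconv : ConvexOn ℝ Set.univ G :=
    convexOn_of_hasDerivWithinAt2_nonneg convex_univ
      (continuous_iff_continuousAt.2 fun t => (hG t).continuousAt).continuousOn
      (fun t _ => (hG t).hasDerivWithinAt) (fun t _ => (hG' t).hasDerivWithinAt)
      (fun t _ => sub_nonneg.2 (ha t))
  have hmin : IsMinOn G Set.univ c := hconv.isMinOn_of_rightDeriv_eq_zero (by simp) <| by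
    rw [(hG c).hasDerivWithinAt.derivWithin (uniqueDiffWithinAt_Ioi c)]
    ring
  have := hmin (Set.mem_univ x)
  simp only [Set.mem_ofPred_eq, G] at this
  linarith

theorem abs_taylor_remainder_le (hf : ∀ x, HasDerivAt f (f' x) x)
    (hf' : ∀ x, HasDerivAt f' (f'' x) x) {K : ℝ} (hK : ∀ x, |f'' x| ≤ K) (c x : ℝ) :
    |f x - f c - f' c * (x - c)| ≤ K / 2 * (x - c) ^ 2 := by
  have lower := half_mul_sq_le_taylor_remainder hf hf' (fun t => neg_le_of_abs_le (hK t)) c x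
  have upper := half_mul_sq_le_taylor_remainder (fun t => (hf t).fun_neg)
    (fun t => (hf' t).fun_neg) (fun t => neg_le_neg (le_of_abs_le (hK t))) c x
  rw [abs_le]
  constructor <;> linarith

theorem mul_sq_le_mul_sub_of_le_deriv2 (hf : ∀ x, HasDerivAt f (f' x) x)
    (hf' : ∀ x, HasDerivAt f' (f'' x) x) {a : ℝ} (ha : ∀ x, a ≤ f'' x) (x y : ℝ) :
    a * (x - y) ^ 2 ≤ (x - y) * (f' x - f' y) := by
  have h₁ := half_mul_sq_le_taylor_remainder hf hf' ha y x
  have h₂ := half_mul_sq_le_taylor_remainder hf hf' ha x y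
  nlinarith

end Taylor

def HasExpGrowth (f : ℝ → ℝ) : Prop :=
  ∃ C k : ℝ, ∀ x, |f x| ≤ C * exp (k * |x|)

namespace HasExpGrowth

variable {f g : ℝ → ℝ}

theorem exists_nonneg (hf : HasExpGrowth f) :
    ∃ C k : ℝ, 0 ≤ C ∧ 0 ≤ k ∧ ∀ x, |f x| ≤ C * exp (k * |x|) := by
  obtain ⟨C, k, h⟩ := hf
  have hC : 0 ≤ C := by simpa using (abs_nonneg _).trans (h 0)
  refine ⟨C, max k 0, hC, le_max_right _ _, fun x => (h x).trans ?_⟩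
  gcongr
  exact le_max_left _ _

theorem const (c : ℝ) : HasExpGrowth fun _ => c := ⟨|c|, 0, fun _ => by simp⟩

theorem id : HasExpGrowth fun x => x :=
  ⟨1, 1, fun x => by simpa using (le_add_of_nonneg_right zero_le_one).trans (add_one_le_exp |x|)⟩

theorem add (hf : HasExpGrowth f) (hg : HasExpGrowth g) : HasExpGrowth fun x => f x + g x := by
  obtain ⟨C, k, hC, hk, hf⟩ := hf.exists_nonneg
  obtain ⟨D, l, hD, hl, hg⟩ := hg.exists_nonneg
  refine ⟨C + D, k + l, fun x => (abs_add_le _ _).trans ?_⟩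
  have hk' : exp (k * |x|) ≤ exp ((k + l) * |x|) := by gcongr; linarith
  have hl' : exp (l * |x|) ≤ exp ((k + l) * |x|) := by gcongr; linarith
  nlinarith [hf x, hg x]

theorem neg (hf : HasExpGrowth f) : HasExpGrowth fun x => -f x := by
  obtain ⟨C, k, h⟩ := hf
  exact ⟨C, k, fun x => (abs_neg (f x)).trans_le (h x)⟩

theorem sub (hf : HasExpGrowth f) (hg : HasExpGrowth g) : HasExpGrowth fun x => f x - g x := by
  simpa only [sub_eq_add_neg] using hf.add hg.neg

theorem mul (hf : HasExpGrowth f) (hg : HasExpGrowth g) : HasExpGrowth fun x => f x * g x := by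
  obtain ⟨C, k, hC, -, hf⟩ := hf.exists_nonneg
  obtain ⟨D, l, -, -, hg⟩ := hg.exists_nonneg
  refine ⟨C * D, k + l, fun x => ?_⟩
  rw [abs_mul, add_mul, exp_add]
  calc |f x| * |g x| ≤ C * exp (k * |x|) * (D * exp (l * |x|)) :=
        mul_le_mul (hf x) (hg x) (abs_nonneg _) (by positivity)
    _ = C * D * (exp (k * |x|) * exp (l * |x|)) := by ring

theorem pow (hf : HasExpGrowth f) (n : ℕ) : HasExpGrowth fun x => f x ^ n := by
  induction n with
  | zero => simpa using const 1
  | succ n ih => simpa only [pow_succ] using ih.mul hf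

theorem of_hasDerivAt {f' : ℝ → ℝ} (hf : ∀ x, HasDerivAt f (f' x) x) (hf' : HasExpGrowth f') :
    HasExpGrowth f := by
  obtain ⟨C, k, hC, hk, hf'⟩ := hf'.exists_nonneg
  refine ⟨|f 0| + C, k + 1, fun x => ?_⟩
  have hmvt : |f x - f 0| ≤ C * exp (k * |x|) * |x - 0| := by
    refine (convex_Icc (-|x|) |x|).norm_image_sub_le_of_norm_hasDerivWithin_le
      (fun t _ => (hf t).hasDerivWithinAt) (fun t ht => (hf' t).trans ?_)
      ⟨neg_nonpos.2 (abs_nonneg x), abs_nonneg x⟩ ⟨neg_abs_le x, le_abs_self x⟩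
    have : |t| ≤ |x| := abs_le.2 ht
    gcongr
  have hx : |x| ≤ exp |x| := (le_add_of_nonneg_right zero_le_one).trans (add_one_le_exp |x|)
  have h1 : 1 ≤ exp ((k + 1) * |x|) := one_le_exp (by positivity)
  have h2 : exp (k * |x|) * |x| ≤ exp ((k + 1) * |x|) := by
    rw [add_mul, one_mul, exp_add]; gcongr
  rw [sub_zero] at hmvt
  calc |f x| ≤ |f 0| + |f x - f 0| := by
        simpa using abs_add_le (f 0) (f x - f 0)
    _ ≤ |f 0| * exp ((k + 1) * |x|) + C * exp ((k + 1) * |x|) := by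
        nlinarith [abs_nonneg (f 0), mul_le_mul_of_nonneg_left h2 hC]
    _ = (|f 0| + C) * exp ((k + 1) * |x|) := by ring

end HasExpGrowth

theorem exists_eq_zero_of_le_deriv {f f' : ℝ → ℝ} (hf : ∀ x, HasDerivAt f (f' x) x) {a : ℝ}
    (ha : 0 < a) (haf : ∀ x, a ≤ f' x) : ∃ m, f m = 0 := by
  have hd : Differentiable ℝ f := fun x => (hf x).differentiableAt
  have hslope : ∀ ⦃x y⦄, x ≤ y → a * (y - x) ≤ f y - f x :=
    mul_sub_le_image_sub_of_le_deriv hd fun x => (hf x).deriv ▸ haf x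
  have hr : a * (|f 0| / a) = |f 0| := mul_div_cancel₀ _ ha.ne'
  have hr0 : 0 ≤ |f 0| / a := by positivity
  exact mem_range_of_exists_le_of_exists_ge (c := 0) hd.continuous
    ⟨-(|f 0| / a), by linarith [hslope (neg_nonpos.2 hr0), le_abs_self (f 0)]⟩
    ⟨|f 0| / a, by linarith [hslope hr0, neg_abs_le (f 0)]⟩

section ScoreVariance

variable {Ω : Type*} [MeasurableSpace Ω] {μ : Measure Ω} [IsProbabilityMeasure μ] {X s : Ω → ℝ}

theorem variance_pos_of_integral_mul_eq_one (hX : MemLp X 2 μ) (hs : ∫ ω, s ω ∂μ = 0)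
    (hXs : ∫ ω, X ω * s ω ∂μ = 1) : 0 < Var[X; μ] := by
  refine (variance_nonneg X μ).lt_of_ne fun h => ?_
  have hconst := ae_eq_integral_of_variance_eq_zero hX h.symm
  have : ∫ ω, X ω * s ω ∂μ = 0 := by
    rw [integral_congr_ae (hconst.mono fun ω hω => by rw [hω]), integral_const_mul, hs, mul_zero]
  linarith

theorem integral_sq_sub_inv_variance_le (hX : MemLp X 2 μ) (hs : MemLp s 2 μ)
    (hs0 : ∫ ω, s ω ∂μ = 0) (hXs : ∫ ω, X ω * s ω ∂μ = 1) (p q : ℝ) :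
    ∫ ω, s ω ^ 2 ∂μ - (Var[X; μ])⁻¹ ≤ ∫ ω, (s ω - (p + q * X ω)) ^ 2 ∂μ := by
  have hv := variance_pos_of_integral_mul_eq_one hX hs0 hXs
  have hL : MemLp (fun ω => p + q * X ω) 2 μ := (memLp_const p).add (hX.const_mul q)
  have hXs_int : Integrable (fun ω => X ω * s ω) μ := hX.integrable_mul hs
  have hsL_int : Integrable (fun ω => s ω * (p + q * X ω)) μ := hs.integrable_mul hL
  have hsL : ∫ ω, s ω * (p + q * X ω) ∂μ = q := by
    have : ∀ ω, s ω * (p + q * X ω) = p * s ω + q * (X ω * s ω) := fun ω => by ring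
    simp_rw [this]
    rw [integral_add ((hs.integrable one_le_two).const_mul p) (hXs_int.const_mul q),
      integral_const_mul, integral_const_mul, hs0, hXs]
    ring
  have hL2 : q ^ 2 * Var[X; μ] ≤ ∫ ω, (p + q * X ω) ^ 2 ∂μ := by
    have := variance_le_expectation_sq hL.aestronglyMeasurable
    rwa [variance_const_add (hX.aestronglyMeasurable.const_mul q), variance_const_mul] at this
  have hexpand : ∫ ω, (s ω - (p + q * X ω)) ^ 2 ∂μ =
      ∫ ω, s ω ^ 2 ∂μ - 2 * ∫ ω, s ω * (p + q * X ω) ∂μ + ∫ ω, (p + q * X ω) ^ 2 ∂μ := by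
    have : ∀ ω, (s ω - (p + q * X ω)) ^ 2 =
        s ω ^ 2 - 2 * (s ω * (p + q * X ω)) + (p + q * X ω) ^ 2 := fun ω => by ring
    simp_rw [this]
    have h₁ : Integrable (fun ω => s ω ^ 2 - 2 * (s ω * (p + q * X ω))) μ :=
      hs.integrable_sq.sub (hsL_int.const_mul 2)
    rw [integral_add h₁ hL.integrable_sq, integral_sub hs.integrable_sq (hsL_int.const_mul 2),
      integral_const_mul]
  -- `E[(s - L)²] = E[s²] - 2 q + E[L²] ≥ E[s²] - 2 q + q² Var[X]`, minimized at `q = 1 / Var[X]`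
  have hsq : (q * Var[X; μ] - 1) ^ 2 / Var[X; μ] = q ^ 2 * Var[X; μ] - 2 * q + (Var[X; μ])⁻¹ := by
    field_simp
    ring
  have : 0 ≤ (q * Var[X; μ] - 1) ^ 2 / Var[X; μ] := by positivity
  rw [hexpand, hsL]
  linarith

end ScoreVariance

theorem tilted_eq_inv_smul_withDensity {α : Type*} [MeasurableSpace α] {μ : Measure α}
    [NeZero μ] {f : α → ℝ} (hf : Integrable (fun x => exp (f x)) μ) :
    ((μ.withDensity fun x => ENNReal.ofReal (exp (f x))) Set.univ)⁻¹ •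
      μ.withDensity (fun x => ENNReal.ofReal (exp (f x))) = μ.tilted f := by
  have hZ := integral_exp_pos hf
  rw [withDensity_apply _ MeasurableSet.univ, setLIntegral_univ,
    ← ofReal_integral_eq_lintegral_ofReal hf (ae_of_all _ fun x => (exp_pos _).le),
    ← withDensity_smul' _ _ (ENNReal.inv_ne_top.2 (ENNReal.ofReal_pos.2 hZ).ne'), Measure.tilted]
  congr with x
  rw [Pi.smul_apply, smul_eq_mul, ENNReal.ofReal_div_of_pos hZ, div_eq_mul_inv, mul_comm]

theorem ContDiff.hasDerivAt_iteratedDeriv {f : ℝ → ℝ} {n : WithTop ℕ∞} (hf : ContDiff ℝ n f)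
    {k : ℕ} (hk : k < n) (x : ℝ) :
    HasDerivAt (iteratedDeriv k f) (iteratedDeriv (k + 1) f x) x := by
  rw [iteratedDeriv_succ]
  exact (hf.differentiable_iteratedDeriv k hk x).hasDerivAt

def gibbsMeasure (V : ℝ → ℝ) : Measure ℝ := volume.tilted fun x => -V x

section Gibbs

variable {V V' V'' V''' : ℝ → ℝ} {a K : ℝ}

theorem integrable_exp_neg_mul_of_hasExpGrowth (hV : ∀ x, HasDerivAt V (V' x) x)
    (hV' : ∀ x, HasDerivAt V' (V'' x) x) (ha : 0 < a) (haV : ∀ x, a ≤ V'' x) {f : ℝ → ℝ}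
    (hf : Continuous f) (hfg : HasExpGrowth f) : Integrable fun x => exp (-V x) * f x := by
  obtain ⟨C, k, hC, -, hfC⟩ := hfg.exists_nonneg
  set r := |V' 0| + k
  have hdom : ∀ x, exp (-V x) * exp (k * |x|) ≤
      exp (-V 0 + r ^ 2 / a) * exp (-(a / 4) * x ^ 2) := by
    intro x
    have hquad := half_mul_sq_le_taylor_remainder hV hV' haV 0 x
    have hlin : -(|V' 0| * |x|) ≤ V' 0 * x := by rw [← abs_mul]; exact neg_abs_le _
    have hamgm : r * |x| ≤ r ^ 2 / a + a / 4 * x ^ 2 := by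
      rw [div_add' _ _ _ ha.ne', le_div_iff₀ ha]
      have h : a ^ 2 * |x| ^ 2 = a ^ 2 * x ^ 2 := by rw [sq_abs]
      nlinarith [sq_nonneg (r - a * |x| / 2)]
    rw [← exp_add, ← exp_add, exp_le_exp]
    simp only [sub_zero] at hquad
    linarith
  have hVc : Continuous V := continuous_iff_continuousAt.2 fun x => (hV x).continuousAt
  refine ((integrable_exp_neg_mul_sq (by positivity : (0 : ℝ) < a / 4)).const_mul
    (C * exp (-V 0 + r ^ 2 / a))).mono' (hVc.neg.rexp.mul hf).aestronglyMeasurable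
    (ae_of_all _ fun x => ?_)
  rw [norm_mul, Real.norm_eq_abs, Real.norm_eq_abs, abs_of_pos (exp_pos _)]
  calc exp (-V x) * |f x| ≤ exp (-V x) * (C * exp (k * |x|)) := by gcongr; exact hfC x
    _ = C * (exp (-V x) * exp (k * |x|)) := by ring
    _ ≤ C * (exp (-V 0 + r ^ 2 / a) * exp (-(a / 4) * x ^ 2)) :=
        mul_le_mul_of_nonneg_left (hdom x) hC
    _ = _ := by ring

theorem integrable_exp_neg (hV : ∀ x, HasDerivAt V (V' x) x)
    (hV' : ∀ x, HasDerivAt V' (V'' x) x) (ha : 0 < a) (haV : ∀ x, a ≤ V'' x) :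
    Integrable fun x => exp (-V x) := by
  simpa using integrable_exp_neg_mul_of_hasExpGrowth hV hV' ha haV continuous_const (.const 1)

theorem isProbabilityMeasure_gibbsMeasure (hV : ∀ x, HasDerivAt V (V' x) x)
    (hV' : ∀ x, HasDerivAt V' (V'' x) x) (ha : 0 < a) (haV : ∀ x, a ≤ V'' x) :
    IsProbabilityMeasure (gibbsMeasure V) :=
  isProbabilityMeasure_tilted (integrable_exp_neg hV hV' ha haV)

theorem integrable_gibbsMeasure (hV : ∀ x, HasDerivAt V (V' x) x)
    (hV' : ∀ x, HasDerivAt V' (V'' x) x) (ha : 0 < a) (haV : ∀ x, a ≤ V'' x) ⦃f : ℝ → ℝ⦄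
    (hf : Continuous f) (hfg : HasExpGrowth f) : Integrable f (gibbsMeasure V) :=
  (integrable_tilted_iff (integrable_exp_neg hV hV' ha haV) f).2 <| by
    simpa only [smul_eq_mul] using integrable_exp_neg_mul_of_hasExpGrowth hV hV' ha haV hf hfg

theorem integral_gibbsMeasure (f : ℝ → ℝ) :
    ∫ x, f x ∂gibbsMeasure V = (∫ x, exp (-V x) * f x) / ∫ x, exp (-V x) := by
  simp only [gibbsMeasure, integral_tilted, smul_eq_mul, div_mul_eq_mul_div, integral_div]

theorem integral_deriv_eq_integral_mul_gibbsMeasure (hV : ∀ x, HasDerivAt V (V' x) x)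
    (hV' : ∀ x, HasDerivAt V' (V'' x) x) (ha : 0 < a) (haV : ∀ x, a ≤ V'' x)
    (hV'g : HasExpGrowth V') {g g' : ℝ → ℝ} (hg : ∀ x, HasDerivAt g (g' x) x)
    (hg'c : Continuous g') (hgg : HasExpGrowth g) (hg'g : HasExpGrowth g') :
    ∫ x, g' x ∂gibbsMeasure V = ∫ x, g x * V' x ∂gibbsMeasure V := by
  have hgc : Continuous g := continuous_iff_continuousAt.2 fun x => (hg x).continuousAt
  have hV'c : Continuous V' := continuous_iff_continuousAt.2 fun x => (hV' x).continuousAt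
  have h₁ := integrable_exp_neg_mul_of_hasExpGrowth hV hV' ha haV hg'c hg'g
  have h₂ := integrable_exp_neg_mul_of_hasExpGrowth hV hV' ha haV
    (f := fun x => g x * V' x) (hgc.mul hV'c) (hgg.mul hV'g)
  have hF : ∀ x, HasDerivAt (fun x => exp (-V x) * g x)
      (exp (-V x) * g' x - exp (-V x) * (g x * V' x)) x := fun x =>
    (((hV x).fun_neg.exp).mul (hg x)).congr_deriv (by ring)
  have hzero := integral_eq_zero_of_hasDerivAt_of_integrable hF (h₁.sub h₂)
    (integrable_exp_neg_mul_of_hasExpGrowth hV hV' ha haV hgc hgg)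
  rw [integral_sub h₁ h₂, sub_eq_zero] at hzero
  rw [integral_gibbsMeasure, integral_gibbsMeasure, hzero]

theorem integral_deriv_gibbsMeasure_eq_zero (hV : ∀ x, HasDerivAt V (V' x) x)
    (hV' : ∀ x, HasDerivAt V' (V'' x) x) (ha : 0 < a) (haV : ∀ x, a ≤ V'' x)
    (hV'g : HasExpGrowth V') : ∫ x, V' x ∂gibbsMeasure V = 0 := by
  simpa using (integral_deriv_eq_integral_mul_gibbsMeasure hV hV' ha haV hV'g
    (fun x => hasDerivAt_const x (1 : ℝ)) continuous_const (.const 1) (.const 0)).symm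

theorem integral_sub_mul_deriv_gibbsMeasure_eq_one (hV : ∀ x, HasDerivAt V (V' x) x)
    (hV' : ∀ x, HasDerivAt V' (V'' x) x) (ha : 0 < a) (haV : ∀ x, a ≤ V'' x)
    (hV'g : HasExpGrowth V') (m : ℝ) : ∫ x, (x - m) * V' x ∂gibbsMeasure V = 1 := by
  have := isProbabilityMeasure_gibbsMeasure hV hV' ha haV
  simpa using (integral_deriv_eq_integral_mul_gibbsMeasure hV hV' ha haV hV'g
    (fun x => (hasDerivAt_id x).sub_const m) continuous_const (HasExpGrowth.id.sub (.const m))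
    (.const 1)).symm

theorem integral_sub_pow_four_gibbsMeasure_le (hV : ∀ x, HasDerivAt V (V' x) x)
    (hV' : ∀ x, HasDerivAt V' (V'' x) x) (ha : 0 < a) (haV : ∀ x, a ≤ V'' x)
    (hV'g : HasExpGrowth V') {m : ℝ} (hm : V' m = 0) :
    ∫ x, (x - m) ^ 4 ∂gibbsMeasure V ≤ 3 / a ^ 2 := by
  have hint := integrable_gibbsMeasure hV hV' ha haV
  have hV'c : Continuous V' := continuous_iff_continuousAt.2 fun x => (hV' x).continuousAt
  have hp : HasExpGrowth fun x => x - m := HasExpGrowth.id.sub (.const m)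
  have hmono : ∀ x, a * (x - m) ^ 2 ≤ (x - m) * V' x := fun x => by
    simpa [hm] using mul_sq_le_mul_sub_of_le_deriv2 hV hV' haV x m
  have h₂ : a * ∫ x, (x - m) ^ 2 ∂gibbsMeasure V ≤ 1 := by
    rw [← integral_const_mul, ← integral_sub_mul_deriv_gibbsMeasure_eq_one hV hV' ha haV hV'g m]
    exact integral_mono ((hint (by fun_prop) (hp.pow 2)).const_mul a)
      (hint (by fun_prop) (hp.mul hV'g)) hmono
  have hstein := integral_deriv_eq_integral_mul_gibbsMeasure hV hV' ha haV hV'g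
    (g := fun x => (x - m) ^ 3) (g' := fun x => 3 * (x - m) ^ 2)
    (fun x => by simpa using ((hasDerivAt_id x).sub_const m).fun_pow 3) (by fun_prop) (hp.pow 3)
    ((HasExpGrowth.const 3).mul (hp.pow 2))
  have h₄ : a * ∫ x, (x - m) ^ 4 ∂gibbsMeasure V ≤ 3 * ∫ x, (x - m) ^ 2 ∂gibbsMeasure V := by
    rw [← integral_const_mul, ← integral_const_mul, hstein]
    exact integral_mono ((hint (by fun_prop) (hp.pow 4)).const_mul a)
      (hint (by fun_prop) ((hp.pow 3).mul hV'g))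
      fun x => by nlinarith [hmono x, sq_nonneg (x - m)]
  rw [le_div_iff₀ (by positivity)]
  nlinarith

theorem variance_id_gibbsMeasure_pos (hV : ∀ x, HasDerivAt V (V' x) x)
    (hV' : ∀ x, HasDerivAt V' (V'' x) x) (ha : 0 < a) (haV : ∀ x, a ≤ V'' x)
    (hV'g : HasExpGrowth V') : 0 < Var[id; gibbsMeasure V] := by
  have := isProbabilityMeasure_gibbsMeasure hV hV' ha haV
  refine variance_pos_of_integral_mul_eq_one (s := V') ?_
    (integral_deriv_gibbsMeasure_eq_zero hV hV' ha haV hV'g)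
    (by simpa using integral_sub_mul_deriv_gibbsMeasure_eq_one hV hV' ha haV hV'g 0)
  exact (memLp_two_iff_integrable_sq aestronglyMeasurable_id).2 <|
    integrable_gibbsMeasure hV hV' ha haV (continuous_pow 2) (HasExpGrowth.id.pow 2)

theorem integral_sq_deriv_sub_tangent_gibbsMeasure_le (hV : ∀ x, HasDerivAt V (V' x) x)
    (hV' : ∀ x, HasDerivAt V' (V'' x) x) (hV'' : ∀ x, HasDerivAt V'' (V''' x) x) (ha : 0 < a)
    (haV : ∀ x, a ≤ V'' x) (hK : ∀ x, |V''' x| ≤ K) {m : ℝ} (hm : V' m = 0) :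
    ∫ x, (V' x - (-(V'' m * m) + V'' m * x)) ^ 2 ∂gibbsMeasure V ≤ 3 * K ^ 2 / (4 * a ^ 2) := by
  have hint := integrable_gibbsMeasure hV hV' ha haV
  have hV'c : Continuous V' := continuous_iff_continuousAt.2 fun x => (hV' x).continuousAt
  have hV'g : HasExpGrowth V' := .of_hasDerivAt hV' (.of_hasDerivAt hV'' ⟨K, 0, by simpa using hK⟩)
  have htaylor : ∀ x, (V' x - (-(V'' m * m) + V'' m * x)) ^ 2 ≤ K ^ 2 / 4 * (x - m) ^ 4 := by
    intro x
    have h := abs_taylor_remainder_le hV' hV'' hK m x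
    rw [hm, sub_zero] at h
    calc (V' x - (-(V'' m * m) + V'' m * x)) ^ 2 = |V' x - V'' m * (x - m)| ^ 2 := by
          rw [sq_abs]; ring
      _ ≤ (K / 2 * (x - m) ^ 2) ^ 2 := pow_le_pow_left₀ (abs_nonneg _) h 2
      _ = K ^ 2 / 4 * (x - m) ^ 4 := by ring
  calc ∫ x, (V' x - (-(V'' m * m) + V'' m * x)) ^ 2 ∂gibbsMeasure V
      ≤ ∫ x, K ^ 2 / 4 * (x - m) ^ 4 ∂gibbsMeasure V :=
        integral_mono (hint (by fun_prop)
          ((hV'g.sub ((HasExpGrowth.const _).add ((HasExpGrowth.const _).mul .id))).pow 2))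
          ((hint (by fun_prop) ((HasExpGrowth.id.sub (.const m)).pow 4)).const_mul _) htaylor
    _ ≤ K ^ 2 / 4 * (3 / a ^ 2) := by
        rw [integral_const_mul]
        exact mul_le_mul_of_nonneg_left
          (integral_sub_pow_four_gibbsMeasure_le hV hV' ha haV hV'g hm) (by positivity)
    _ = 3 * K ^ 2 / (4 * a ^ 2) := by field_simp

theorem integral_deriv2_sub_le_inv_variance_gibbsMeasure (hV : ∀ x, HasDerivAt V (V' x) x)
    (hV' : ∀ x, HasDerivAt V' (V'' x) x) (hV'' : ∀ x, HasDerivAt V'' (V''' x) x) (ha : 0 < a)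
    (haV : ∀ x, a ≤ V'' x) (hK : ∀ x, |V''' x| ≤ K) :
    ∫ x, V'' x ∂gibbsMeasure V - 3 * K ^ 2 / (4 * a ^ 2) ≤ (Var[id; gibbsMeasure V])⁻¹ := by
  have := isProbabilityMeasure_gibbsMeasure hV hV' ha haV
  have hint := integrable_gibbsMeasure hV hV' ha haV
  have hV'c : Continuous V' := continuous_iff_continuousAt.2 fun x => (hV' x).continuousAt
  have hV''c : Continuous V'' := continuous_iff_continuousAt.2 fun x => (hV'' x).continuousAt
  have hV''g : HasExpGrowth V'' := .of_hasDerivAt hV'' ⟨K, 0, by simpa using hK⟩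
  have hV'g : HasExpGrowth V' := .of_hasDerivAt hV' hV''g
  have hscore : ∫ x, V' x ^ 2 ∂gibbsMeasure V = ∫ x, V'' x ∂gibbsMeasure V := by
    simpa only [sq] using (integral_deriv_eq_integral_mul_gibbsMeasure hV hV' ha haV hV'g hV'
      hV''c hV'g hV''g).symm
  obtain ⟨m, hm⟩ := exists_eq_zero_of_le_deriv hV' ha haV
  have hproj := integral_sq_sub_inv_variance_le (X := id) (s := V')
    ((memLp_two_iff_integrable_sq aestronglyMeasurable_id).2
      (hint (continuous_pow 2) (HasExpGrowth.id.pow 2)))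
    ((memLp_two_iff_integrable_sq hV'c.aestronglyMeasurable).2 (hint (hV'c.pow 2) (hV'g.pow 2)))
    (integral_deriv_gibbsMeasure_eq_zero hV hV' ha haV hV'g)
    (by simpa using integral_sub_mul_deriv_gibbsMeasure_eq_one hV hV' ha haV hV'g 0)
    (-(V'' m * m)) (V'' m)
  simp only [id] at hproj
  linarith [integral_sq_deriv_sub_tangent_gibbsMeasure_le hV hV' hV'' ha haV hK hm]

end Gibbs

def hybridPotential (φ : ℝ → ℝ) (β μ0 δr : ℝ) (x : ℝ) : ℝ :=
  φ x + β / 2 * x ^ 2 - (β * μ0 - δr) * x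

theorem hasDerivAt_hybridPotential {φ : ℝ → ℝ} (hφ : ContDiff ℝ 3 φ) (β μ0 δr : ℝ) :
    (∀ x, HasDerivAt (hybridPotential φ β μ0 δr) (deriv φ x + β * x - (β * μ0 - δr)) x) ∧
    (∀ x, HasDerivAt (fun x => deriv φ x + β * x - (β * μ0 - δr)) (iteratedDeriv 2 φ x + β) x) ∧
    ∀ x, HasDerivAt (fun x => iteratedDeriv 2 φ x + β) (iteratedDeriv 3 φ x) x := by
  have h : ∀ k : ℕ, (k : WithTop ℕ∞) < 3 → ∀ x,
      HasDerivAt (iteratedDeriv k φ) (iteratedDeriv (k + 1) φ x) x :=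
    fun _ hk => hφ.hasDerivAt_iteratedDeriv hk
  refine ⟨fun x => ?_, fun x => ?_, fun x => (h 2 (by norm_num) x).add_const β⟩
  · have h₀ : HasDerivAt φ (deriv φ x) x := by simpa using h 0 (by norm_num) x
    exact ((h₀.fun_add ((hasDerivAt_pow 2 x).const_mul (β / 2))).fun_sub
      ((hasDerivAt_id x).const_mul (β * μ0 - δr))).congr_deriv (by simp; ring)
  · have h₁ : HasDerivAt (deriv φ) (iteratedDeriv 2 φ x) x := by
      simpa only [iteratedDeriv_one] using h 1 (by norm_num) x
    exact ((h₁.fun_add ((hasDerivAt_id x).const_mul β)).sub_const _).congr_deriv (by simp)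

theorem hybrid_eq_gibbsMeasure {φ : ℝ → ℝ} {β μ0 δr : ℝ}
    (h : Integrable fun x => exp (-hybridPotential φ β μ0 δr x)) :
    hybrid φ β μ0 δr = gibbsMeasure (hybridPotential φ β μ0 δr) := by
  have hdens : hybridDens φ β μ0 δr = fun x => exp (-hybridPotential φ β μ0 δr x) :=
    funext fun x => by simp only [hybridDens, hybridPotential]; ring_nf
  rw [hybrid, hdens, gibbsMeasure, tilted_eq_inv_smul_withDensity h]

theorem three_mul_sq_div_le_sq_mul_sq_div {a b K : ℝ} (ha : 0 < a) (hab : a ≤ b) :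
    3 * K ^ 2 / (4 * a ^ 2) ≤ K ^ 2 * b ^ 2 / a ^ 4 := by
  rw [div_le_div_iff₀ (by positivity) (by positivity)]
  have : a ^ 2 ≤ b ^ 2 := pow_le_pow_left₀ ha.le hab 2
  nlinarith [mul_le_mul_of_nonneg_left this (by positivity : 0 ≤ K ^ 2 * (4 * a ^ 2)),
    (by positivity : 0 ≤ K ^ 2 * a ^ 4)]

theorem hybrid_precision_lower_bound_general
    (φ : ℝ → ℝ) (B K3 : ℝ) (hφ : ContDiff ℝ 3 φ)
    (hB : ∀ x y, iteratedDeriv 2 φ x - iteratedDeriv 2 φ y ≤ B)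
    (hK3 : ∀ x, |iteratedDeriv 3 φ x| ≤ K3)
    (β μ0 δr : ℝ)
    (hpos : 0 < β + iteratedDeriv 2 φ μ0 - B) :
    IsProbabilityMeasure (hybrid φ β μ0 δr) ∧
    Integrable (fun x => x) (hybrid φ β μ0 δr) ∧
    Integrable (fun x => x ^ 2) (hybrid φ β μ0 δr) ∧
    Integrable (fun x => iteratedDeriv 2 φ x) (hybrid φ β μ0 δr) ∧
    0 < hybridVar φ β μ0 δr ∧
    β + (∫ x, iteratedDeriv 2 φ x ∂(hybrid φ β μ0 δr)) -
        K3 ^ 2 * (β + iteratedDeriv 2 φ μ0 + B) ^ 2 /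
          (β + iteratedDeriv 2 φ μ0 - B) ^ 4 ≤
      (hybridVar φ β μ0 δr)⁻¹ := by
  obtain ⟨hV, hV', hV''⟩ := hasDerivAt_hybridPotential hφ β μ0 δr
  have haV : ∀ x, β + iteratedDeriv 2 φ μ0 - B ≤ iteratedDeriv 2 φ x + β :=
    fun x => by linarith [hB μ0 x]
  have hφ''g : HasExpGrowth (iteratedDeriv 2 φ) :=
    .of_hasDerivAt (hφ.hasDerivAt_iteratedDeriv (k := 2) (by norm_num))
      ⟨K3, 0, by simpa using hK3⟩
  have hprob := isProbabilityMeasure_gibbsMeasure hV hV' hpos haV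
  have hint := integrable_gibbsMeasure hV hV' hpos haV
  have hφ''int := hint (hφ.continuous_iteratedDeriv 2 (by norm_num)) hφ''g
  have hhybrid := hybrid_eq_gibbsMeasure (integrable_exp_neg hV hV' hpos haV)
  have hvar : hybridVar φ β μ0 δr = Var[id; gibbsMeasure (hybridPotential φ β μ0 δr)] := by
    rw [hybridVar, hybridMean, hhybrid, variance_eq_integral measurable_id.aemeasurable]
    rfl
  rw [hvar, hhybrid]
  refine ⟨hprob, hint continuous_id .id, hint (continuous_pow 2) (HasExpGrowth.id.pow 2), hφ''int,
    variance_id_gibbsMeasure_pos hV hV' hpos haV (.of_hasDerivAt hV' (hφ''g.add (.const β))), ?_⟩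
  have hbound := integral_deriv2_sub_le_inv_variance_gibbsMeasure hV hV' hV'' hpos haV hK3
  rw [integral_add hφ''int (integrable_const β), integral_const, probReal_univ, one_smul] at hbound
  have hab : β + iteratedDeriv 2 φ μ0 - B ≤ β + iteratedDeriv 2 φ μ0 + B := by
    linarith [hB 0 0]
  linarith [three_mul_sq_div_le_sq_mul_sq_div (K := K3) hpos hab]

/-- fine lower bound on the hybrid precision.  If `φ` is C³ with
`sup φ'' − inf φ'' ≤ B`, `|φ'''| ≤ K3` and `β + φ''(μ0) − B > 0`, then the hybrid
is a well-defined probability measure with finite variance `v_h > 0` and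
`v_h⁻¹ ≥ β + E_h[φ''] − K3²·(β + φ''(μ0) + B)²·(β + φ''(μ0) − B)⁻⁴`. -/
theorem hybrid_precision_lower_bound
    (φ : ℝ → ℝ) (B K3 : ℝ) (hφ : ContDiff ℝ 3 φ)
    (hB : ∀ x y, iteratedDeriv 2 φ x - iteratedDeriv 2 φ y ≤ B)
    (hK3 : ∀ x, |iteratedDeriv 3 φ x| ≤ K3)
    (β μ0 δr : ℝ) (hβ : 0 < β)
    (hpos : 0 < β + iteratedDeriv 2 φ μ0 - B) :
    IsProbabilityMeasure (hybrid φ β μ0 δr) ∧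
    Integrable (fun x => x) (hybrid φ β μ0 δr) ∧
    Integrable (fun x => x ^ 2) (hybrid φ β μ0 δr) ∧
    Integrable (fun x => iteratedDeriv 2 φ x) (hybrid φ β μ0 δr) ∧
    0 < hybridVar φ β μ0 δr ∧
    β + (∫ x, iteratedDeriv 2 φ x ∂(hybrid φ β μ0 δr)) -
        K3 ^ 2 * (β + iteratedDeriv 2 φ μ0 + B) ^ 2 /
          (β + iteratedDeriv 2 φ μ0 - B) ^ 4 ≤
      (hybridVar φ β μ0 δr)⁻¹ :=
  hybrid_precision_lower_bound_general φ B K3 hφ hB hK3 β μ0 δr hpos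
end
end

section
/- Let φ : ℝ → ℝ be continuously differentiable and β > 0, μ0, δr ∈ ℝ be such that the hybrid h is a well-defined probability measure with finite mean μ_h and finite variance v_h > 0, φ' is h-integrable, and the unnormalized density l(x)·exp(−(β/2)x² + (β μ0 − δr)x) tends to 0 as x → ±∞. Then the site natural parameters r_site := μ_h/v_h − (β μ0 − δr) and β_site := v_h⁻¹ − β satisfy the exact identity r_site = β_site·μ_h − E_h[φ'(x)]. -/
open MeasureTheory Real Filter

noncomputable section

/-! With `c = β μ0 − δr`, the unnormalized density `D` satisfies `D' = (c − β x − φ') D`.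
Since `D` vanishes at `±∞`, `∫ D' = 0`, i.e. `E_h[φ'] = c − β μ_h` (Stein's identity for `h`).
The claimed identity is this one rearranged: the terms `μ_h / v_h` on both sides cancel. -/

open scoped ENNReal

section WithDensity

variable {α : Type*} [MeasurableSpace α] {μ : Measure α} {D : α → ℝ}

theorem integral_withDensity_ofReal (hD : Measurable D) (hD0 : ∀ x, 0 ≤ D x) (g : α → ℝ) :
    ∫ x, g x ∂μ.withDensity (fun x => ENNReal.ofReal (D x)) = ∫ x, D x * g x ∂μ := by
  rw [integral_withDensity_eq_integral_toReal_smul hD.ennreal_ofReal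
    (ae_of_all _ fun _ => ENNReal.ofReal_lt_top)]
  simp only [ENNReal.toReal_ofReal (hD0 _), smul_eq_mul]

theorem integrable_withDensity_ofReal_iff (hD : Measurable D) (hD0 : ∀ x, 0 ≤ D x)
    {g : α → ℝ} :
    Integrable g (μ.withDensity fun x => ENNReal.ofReal (D x)) ↔
      Integrable (fun x => D x * g x) μ := by
  rw [integrable_withDensity_iff_integrable_smul' hD.ennreal_ofReal
    (ae_of_all _ fun _ => ENNReal.ofReal_lt_top)]
  simp only [ENNReal.toReal_ofReal (hD0 _), smul_eq_mul]

theorem inv_measure_univ_ne_zero_and_ne_top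
    (hμ : IsProbabilityMeasure ((μ Set.univ)⁻¹ • μ)) :
    (μ Set.univ)⁻¹ ≠ 0 ∧ (μ Set.univ)⁻¹ ≠ ∞ := by
  have h := hμ.measure_univ
  rw [Measure.smul_apply, smul_eq_mul] at h
  refine ⟨fun h0 => ?_, fun htop => ?_⟩
  · simp [h0] at h
  · simp [ENNReal.inv_eq_top.1 htop] at h

end WithDensity

theorem integral_withDensity_eq_zero_of_hasDerivAt {D s : ℝ → ℝ}
    (hderiv : ∀ x, HasDerivAt D (D x * s x) x) (hD0 : ∀ x, 0 ≤ D x)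
    (hs : Integrable s (volume.withDensity fun x => ENNReal.ofReal (D x)))
    (hbot : Tendsto D atBot (nhds 0)) (htop : Tendsto D atTop (nhds 0)) :
    ∫ x, s x ∂volume.withDensity (fun x => ENNReal.ofReal (D x)) = 0 := by
  have hD : Measurable D :=
    (continuous_iff_continuousAt.2 fun x => (hderiv x).continuousAt).measurable
  rw [integral_withDensity_ofReal hD hD0,
    integral_of_hasDerivAt_of_tendsto hderiv ((integrable_withDensity_ofReal_iff hD hD0).1 hs)
      hbot htop, sub_self]

theorem hasDerivAt_hybridDens {φ : ℝ → ℝ} (hφ : Differentiable ℝ φ) (β μ0 δr x : ℝ) :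
    HasDerivAt (hybridDens φ β μ0 δr)
      (hybridDens φ β μ0 δr x * (β * μ0 - δr - β * x - deriv φ x)) x := by
  have hexponent : HasDerivAt (fun x => -(φ x) - β / 2 * x ^ 2 + (β * μ0 - δr) * x)
      (-deriv φ x - β * x + (β * μ0 - δr)) x := by
    refine (((hφ x).hasDerivAt.neg.sub ((hasDerivAt_pow 2 x).const_mul (β / 2))).add
      ((hasDerivAt_id' x).const_mul (β * μ0 - δr))).congr_deriv ?_
    norm_num
    ring
  unfold hybridDens
  convert hexponent.exp using 1
  ring

theorem site_parameters_exact_identity_general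
    (φ : ℝ → ℝ) (hφ : ContDiff ℝ 1 φ)
    (β μ0 δr : ℝ)
    (hprob : IsProbabilityMeasure (hybrid φ β μ0 δr))
    (hmean : Integrable (fun x => x) (hybrid φ β μ0 δr))
    (hd : Integrable (fun x => deriv φ x) (hybrid φ β μ0 δr))
    (htop : Tendsto (fun x => hybridDens φ β μ0 δr x) atTop (nhds 0))
    (hbot : Tendsto (fun x => hybridDens φ β μ0 δr x) atBot (nhds 0)) :
    hybridMean φ β μ0 δr / hybridVar φ β μ0 δr - (β * μ0 - δr) =
      ((hybridVar φ β μ0 δr)⁻¹ - β) * hybridMean φ β μ0 δr -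
        ∫ x, deriv φ x ∂(hybrid φ β μ0 δr) := by
  obtain ⟨hc0, hctop⟩ := inv_measure_univ_ne_zero_and_ne_top hprob
  have hlin : Integrable (fun x => β * μ0 - δr - β * x) (hybrid φ β μ0 δr) :=
    (integrable_const _).sub (hmean.const_mul β)
  have hscore : ∫ x, (β * μ0 - δr - β * x - deriv φ x) ∂(hybrid φ β μ0 δr) = 0 := by
    rw [hybrid, integral_smul_measure, integral_withDensity_eq_zero_of_hasDerivAt
      (hasDerivAt_hybridDens (hφ.differentiable one_ne_zero) β μ0 δr) (fun _ => (exp_pos _).le)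
      ((integrable_smul_measure hc0 hctop).1 (hlin.sub hd)) hbot htop, smul_zero]
  rw [integral_sub hlin hd, integral_sub (integrable_const _) (hmean.const_mul β),
    integral_const_mul, integral_const, probReal_univ, one_smul] at hscore
  rw [hybridMean, div_eq_inv_mul]
  linear_combination -hscore

/-- exact identity for the site natural parameters.  If `φ` is C¹,
the hybrid is a well-defined probability measure with finite mean `μ_h` and finite
variance `v_h > 0`, `φ'` is `h`-integrable, and the unnormalized density vanishes
at `±∞`, then `r_site = β_site·μ_h − E_h[φ'(x)]`, where
`r_site := μ_h/v_h − (β μ0 − δr)` and `β_site := v_h⁻¹ − β`. -/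
theorem site_parameters_exact_identity
    (φ : ℝ → ℝ) (hφ : ContDiff ℝ 1 φ)
    (β μ0 δr : ℝ) (hβ : 0 < β)
    (hprob : IsProbabilityMeasure (hybrid φ β μ0 δr))
    (hmean : Integrable (fun x => x) (hybrid φ β μ0 δr))
    (hm2 : Integrable (fun x => x ^ 2) (hybrid φ β μ0 δr))
    (hvar : 0 < hybridVar φ β μ0 δr)
    (hd : Integrable (fun x => deriv φ x) (hybrid φ β μ0 δr))
    (htop : Tendsto (fun x => hybridDens φ β μ0 δr x) atTop (nhds 0))
    (hbot : Tendsto (fun x => hybridDens φ β μ0 δr x) atBot (nhds 0)) :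
    hybridMean φ β μ0 δr / hybridVar φ β μ0 δr - (β * μ0 - δr) =
      ((hybridVar φ β μ0 δr)⁻¹ - β) * hybridMean φ β μ0 δr -
        ∫ x, deriv φ x ∂(hybrid φ β μ0 δr) :=
  site_parameters_exact_identity_general φ hφ β μ0 δr hprob hmean hd htop hbot
end
end

section
/- (Existence of a mode near an approximate critical point.) Let ψ : ℝ → ℝ be three times continuously differentiable with |ψ'''(x)| ≤ M for all x, and let x0 ∈ ℝ be such that A := ψ''(x0) > 0 and A² ≥ 2M·|ψ'(x0)|. Then there exists x⋆ ∈ ℝ with ψ'(x⋆) = 0 and |x⋆ − x0| ≤ 2|ψ'(x0)|/A. -/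
/-! With `g = ψ'`, `b = g x₀` and `r = 2|b|/A`, first-order Taylor with Lagrange remainder gives
`|g (x₀ ± r) - b ∓ A r| ≤ M r² / 2`, and the discriminant condition says exactly
`M r² / 2 ≤ |b| = A r / 2`. Hence `g (x₀ - r) ≤ 0 ≤ g (x₀ + r)` whatever the sign of `b`, and the
intermediate value theorem produces the zero. -/

open Set

theorem abs_sub_sub_deriv_mul_le_of_abs_iteratedDeriv_two_le {g : ℝ → ℝ} {M : ℝ}
    (hg : ContDiff ℝ 2 g) (hM : ∀ x, |iteratedDeriv 2 g x| ≤ M) (a y : ℝ) :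
    |g y - g a - deriv g a * (y - a)| ≤ M / 2 * (y - a) ^ 2 := by
  rcases eq_or_ne a y with rfl | hay
  · simp
  obtain ⟨c, -, hc⟩ := taylor_mean_remainder_lagrange_iteratedDeriv (n := 1) hay hg.contDiffOn
  have hderiv : derivWithin g (uIcc a y) a = deriv g a :=
    (hg.differentiable two_ne_zero a).derivWithin ((uniqueDiffOn_uIcc hay) a left_mem_uIcc)
  norm_num [hderiv] at hc
  calc |g y - g a - deriv g a * (y - a)| = |iteratedDeriv 2 g c| / 2 * (y - a) ^ 2 := by
        rw [← abs_sq (y - a), ← abs_two, ← abs_div, ← abs_mul]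
        congr 1
        linarith
    _ ≤ M / 2 * (y - a) ^ 2 := by gcongr; exact hM c

theorem exists_zero_abs_sub_le_of_deriv_pos {g : ℝ → ℝ} {M x₀ : ℝ}
    (hg : ContDiff ℝ 2 g) (hM : ∀ x, |iteratedDeriv 2 g x| ≤ M) (hA : 0 < deriv g x₀)
    (hdisc : 2 * M * |g x₀| ≤ deriv g x₀ ^ 2) :
    ∃ x, g x = 0 ∧ |x - x₀| ≤ 2 * |g x₀| / deriv g x₀ := by
  set A := deriv g x₀
  set r := 2 * |g x₀| / A with hr
  have hr0 : 0 ≤ r := by positivity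
  have hAr : A * r = 2 * |g x₀| := by rw [hr]; field_simp
  have hquad : M / 2 * r ^ 2 ≤ |g x₀| := by
    have : M / 2 * r ^ 2 * A ^ 2 ≤ |g x₀| * A ^ 2 := by
      calc M / 2 * r ^ 2 * A ^ 2 = 2 * M * |g x₀| * |g x₀| := by
            linear_combination (M / 2 * (A * r + 2 * |g x₀|)) * hAr
        _ ≤ A ^ 2 * |g x₀| := by gcongr
        _ = |g x₀| * A ^ 2 := mul_comm _ _
    exact le_of_mul_le_mul_right this (by positivity)
  have hleft : g (x₀ - r) ≤ 0 := by
    have := abs_le.mp (abs_sub_sub_deriv_mul_le_of_abs_iteratedDeriv_two_le hg hM x₀ (x₀ - r))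
    nlinarith [le_abs_self (g x₀)]
  have hright : 0 ≤ g (x₀ + r) := by
    have := abs_le.mp (abs_sub_sub_deriv_mul_le_of_abs_iteratedDeriv_two_le hg hM x₀ (x₀ + r))
    nlinarith [neg_abs_le (g x₀)]
  obtain ⟨x, hx, hgx⟩ := intermediate_value_Icc (by linarith : x₀ - r ≤ x₀ + r)
    hg.continuous.continuousOn ⟨hleft, hright⟩
  exact ⟨x, hgx, abs_sub_le_iff.mpr ⟨by linarith [hx.2], by linarith [hx.1]⟩⟩

/-- existence of a mode near an approximate critical point:
if `ψ` is C³ with `|ψ'''| ≤ M`, `A := ψ''(x0) > 0` and `A² ≥ 2M·|ψ'(x0)|`, then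
there is `x⋆` with `ψ'(x⋆) = 0` and `|x⋆ − x0| ≤ 2|ψ'(x0)|/A`. -/
theorem mode_near_approximate_critical_point
    (ψ : ℝ → ℝ) (M : ℝ) (hψ : ContDiff ℝ 3 ψ)
    (hM : ∀ x, |iteratedDeriv 3 ψ x| ≤ M)
    (x0 : ℝ) (hA : 0 < iteratedDeriv 2 ψ x0)
    (hdisc : 2 * M * |deriv ψ x0| ≤ (iteratedDeriv 2 ψ x0) ^ 2) :
    ∃ xstar : ℝ, deriv ψ xstar = 0 ∧
      |xstar - x0| ≤ 2 * |deriv ψ x0| / iteratedDeriv 2 ψ x0 := by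
  have hψ' : ContDiff ℝ 2 (deriv ψ) := hψ.deriv'
  rw [iteratedDeriv_succ', iteratedDeriv_one] at hA hdisc ⊢
  rw [iteratedDeriv_succ'] at hM
  exact exists_zero_abs_sub_le_of_deriv_pos hψ' hM hA hdisc
end
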